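/- arXiv:1412.3984 — 4 statements merged into one kernel-verified Lean document; each statement's English description precedes it below -/
import Mathlib

section
/- Every prefix of the word s_m of length k contains at most ⌈log₂(k+1)⌉ distinct letters. -/
/-!
Induction on `m`. A prefix of `s_{m+1}` of length at most `|s_m| = 2^m - 1` is a prefix of `s_m`.
A longer prefix has `k ≥ 2^m`, so `⌈log₂(k+1)⌉ ≥ m + 1`, while `s_{m+1}` has only the `m + 1`
letters `1, …, m + 1` altogether.
-/
def sWord : ℕ → List ℕ
  | 0 => []
  | i + 1 => sWord i ++ [i + 1] ++ sWord i

lemma length_sWord_add_one (m : ℕ) : (sWord m).length + 1 = 2 ^ m := by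
  induction m with
  | zero => rfl
  | succ n ih =>
    simp only [sWord, List.length_append, List.length_singleton, pow_succ]
    omega

lemma mem_sWord {m x : ℕ} : x ∈ sWord m ↔ 1 ≤ x ∧ x ≤ m := by
  induction m with
  | zero => simp only [sWord, List.not_mem_nil, false_iff]; omega
  | succ n ih =>
    simp only [sWord, List.mem_append, List.mem_singleton, ih]
    omega

lemma card_toFinset_sWord (m : ℕ) : (sWord m).toFinset.card = m := by
  have : (sWord m).toFinset = Finset.Icc 1 m := by
    ext x
    simp [mem_sWord]
  simp [this]

lemma take_sWord_succ_of_le_length {m k : ℕ} (hk : k ≤ (sWord m).length) :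
    (sWord (m + 1)).take k = (sWord m).take k := by
  rw [sWord, List.append_assoc, List.take_append_of_le_length hk]

/-- Every prefix of `s m` of length `k` contains at most `⌈log₂(k+1)⌉` distinct letters. -/
theorem sWord_prefix_distinct_letters (m k : ℕ) :
    ((sWord m).take k).toFinset.card ≤ Nat.clog 2 (k + 1) := by
  induction m generalizing k with
  | zero => simp [sWord]
  | succ n ih =>
    by_cases hk : k ≤ (sWord n).length
    · rw [take_sWord_succ_of_le_length hk]
      exact ih k
    · have hclog : n < Nat.clog 2 (k + 1) :=
        (Nat.lt_clog_iff_pow_lt one_lt_two).2 (by have := length_sWord_add_one n; omega)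
      calc ((sWord (n + 1)).take k).toFinset.card
          ≤ (sWord (n + 1)).toFinset.card :=
            Finset.card_le_card <|
              Multiset.toFinset_subset.2 <| Multiset.coe_subset.2 <| List.take_subset _ _
        _ = n + 1 := card_toFinset_sWord (n + 1)
        _ ≤ Nat.clog 2 (k + 1) := hclog
end

section
/- Every nonempty contiguous subword (factor) of s_m contains a letter that occurs exactly once in that subword. -/
lemma mem_sWord_le {c m : ℕ} (h : c ∈ sWord m) : c ≤ m := by
  induction m with
  | zero => simp [sWord] at h
  | succ n ih =>
    simp only [sWord, List.mem_append, List.mem_singleton] at h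
    rcases h with (h | h) | h
    · exact le_trans (ih h) (Nat.le_succ n)
    · omega
    · exact le_trans (ih h) (Nat.le_succ n)

lemma sWord_reverse (m : ℕ) : (sWord m).reverse = sWord m := by
  induction m with
  | zero => simp [sWord]
  | succ n ih => simp [sWord, ih]

lemma count_sWord_succ (m : ℕ) : (sWord (m + 1)).count (m + 1) = 1 := by
  have h0 : (sWord m).count (m + 1) = 0 := by
    rw [List.count_eq_zero]
    intro hmem
    have := mem_sWord_le hmem
    omega
  simp [sWord, List.count_append, h0]

lemma prefix_helper {m : ℕ} {p : List ℕ}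
    (hp : p <+: sWord m ++ [m + 1] ++ sWord m) (hnot : (m + 1) ∉ p) :
    p <+: sWord m := by
  have hA : sWord m <+: sWord m ++ [m + 1] ++ sWord m := by
    rw [List.append_assoc]; exact List.prefix_append _ _
  rcases List.prefix_or_prefix_of_prefix hp hA with h | h
  · exact h
  · obtain ⟨r, hr⟩ := h
    subst hr
    obtain ⟨t, ht⟩ := hp
    rw [List.append_assoc, List.append_assoc] at ht
    have hr2 : r ++ t = [m + 1] ++ sWord m := List.append_cancel_left ht
    cases r with
    | nil => simp
    | cons a r' =>
      exfalso
      have ha : a = m + 1 := by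
        have := congrArg (fun l => l.head?) hr2
        simpa using this
      exact hnot (by simp [ha])

lemma infix_unique (m : ℕ) : ∀ v : List ℕ, v <:+: sWord m → v ≠ [] →
    ∃ c, v.count c = 1 := by
  induction m with
  | zero =>
    intro v hv hne
    exact absurd (List.eq_nil_of_infix_nil (by simpa [sWord] using hv)) hne
  | succ n ih =>
    intro v hv hne
    by_cases hmem : (n + 1) ∈ v
    · refine ⟨n + 1, ?_⟩
      have h1 : v.count (n + 1) ≤ (sWord (n + 1)).count (n + 1) :=
        hv.sublist.count_le _
      rw [count_sWord_succ] at h1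
      have h2 : 1 ≤ v.count (n + 1) := List.one_le_count_iff.mpr hmem
      omega
    · obtain ⟨u, u', huu⟩ := hv
      have hs : sWord (n + 1) = u ++ v ++ u' := huu.symm
      have hmm : (n + 1) ∈ u ∨ (n + 1) ∈ u' := by
        have hx : (n + 1) ∈ sWord (n + 1) := by simp [sWord]
        rw [hs] at hx
        simp only [List.mem_append] at hx
        rcases hx with (h | h) | h
        · exact Or.inl h
        · exact absurd h hmem
        · exact Or.inr h
      have key : v <:+: sWord n := by
        rcases hmm with hu | hu'
        · -- v ++ u' is a suffix avoiding n+1 : use reverse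
          have hsuf : v ++ u' <:+ sWord (n + 1) := by
            rw [hs, List.append_assoc]; exact List.suffix_append _ _
          have hpre : (v ++ u').reverse <+: sWord (n + 1) := by
            rw [← sWord_reverse (n + 1)]
            exact List.reverse_prefix.mpr (by simpa using hsuf)
          have hnot : (n + 1) ∉ (v ++ u').reverse := by
            simp only [List.mem_reverse, List.mem_append]
            rintro (h | h)
            · exact hmem h
            · have h2 : 2 ≤ (sWord (n + 1)).count (n + 1) := by
                rw [hs]
                have c1 : 1 ≤ u.count (n + 1) := List.one_le_count_iff.mpr hu
                have c2 : 1 ≤ u'.count (n + 1) := List.one_le_count_iff.mpr h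
                simp only [List.count_append]; omega
              rw [count_sWord_succ] at h2; omega
          have hph : (v ++ u').reverse <+: sWord n :=
            prefix_helper (by simpa [sWord] using hpre) hnot
          have h2 : v ++ u' <:+ sWord n :=
            List.reverse_prefix.mp (by rw [sWord_reverse]; exact hph)
          exact ((List.prefix_append v u').isInfix).trans h2.isInfix
        · -- u ++ v is a prefix avoiding n+1
          have hpre : u ++ v <+: sWord (n + 1) := by
            rw [hs]; exact ⟨u', by simp⟩
          have hnot : (n + 1) ∉ u ++ v := by
            simp only [List.mem_append]
            rintro (h | h)
            · have h2 : 2 ≤ (sWord (n + 1)).count (n + 1) := by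
                rw [hs]
                have c1 : 1 ≤ u.count (n + 1) := List.one_le_count_iff.mpr h
                have c2 : 1 ≤ u'.count (n + 1) := List.one_le_count_iff.mpr hu'
                simp only [List.count_append]; omega
              rw [count_sWord_succ] at h2; omega
            · exact hmem h
          have h2 : u ++ v <+: sWord n :=
            prefix_helper (by simpa [sWord] using hpre) hnot
          exact ((List.suffix_append u v).isInfix).trans h2.isInfix
      exact ih v key hne

/-- Every nonempty contiguous subword of `s m` has a letter occurring exactly once in it. -/
theorem sWord_factor_has_unique_letter (m : ℕ) (u v u' : List ℕ)
    (h : sWord m = u ++ v ++ u') (hv : v ≠ []) :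
    ∃ c, v.count c = 1 := by
  exact infix_unique m v ⟨u, u', h.symm⟩ hv
end

section
/- For every k with 1 ≤ k ≤ 2^m - 1, the block B(k) = [k - (2^{ν₂(k)} - 1), k + (2^{ν₂(k)} - 1)] is contained in {1,...,2^m - 1}, and every index j in B(k) satisfies d_m(j) ≥ d_m(k), with equality only for j = k. -/
def ν₂ (k : ℕ) : ℕ := padicValNat 2 k

def depth (m k : ℕ) : ℕ := m - ν₂ k

/-- The block of column `k`. -/
def block (k : ℕ) : Finset ℕ := Finset.Icc (k - (2 ^ ν₂ k - 1)) (k + (2 ^ ν₂ k - 1))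

/-! The block of `k` is the window of radius `2 ^ ν₂ k - 1` around `k`, so it contains no multiple
of `2 ^ ν₂ k` other than `k`: every other `j` in it has `ν₂ j < ν₂ k`, i.e. larger depth. It fits in
`[1, 2 ^ m - 1]` because the next multiple of `2 ^ ν₂ k` after `k` is still at most `2 ^ m`. -/

theorem Nat.add_le_of_dvd_of_dvd_of_lt {n a b : ℕ} (ha : n ∣ a) (hb : n ∣ b) (hab : a < b) :
    a + n ≤ b :=
  ((Nat.modEq_zero_iff_dvd.2 ha).trans (Nat.modEq_zero_iff_dvd.2 hb).symm).add_le_of_lt hab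

theorem pow_nu2_dvd (k : ℕ) : 2 ^ ν₂ k ∣ k := pow_padicValNat_dvd

theorem pow_nu2_le {k : ℕ} (hk : 0 < k) : 2 ^ ν₂ k ≤ k := Nat.le_of_dvd hk (pow_nu2_dvd k)

theorem nu2_lt_of_lt_two_pow {m k : ℕ} (hk : 0 < k) (hkm : k < 2 ^ m) : ν₂ k < m :=
  (Nat.pow_lt_pow_iff_right (by norm_num)).mp ((pow_nu2_le hk).trans_lt hkm)

theorem add_pow_nu2_le_two_pow {m k : ℕ} (hk : 0 < k) (hkm : k < 2 ^ m) :
    k + 2 ^ ν₂ k ≤ 2 ^ m :=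
  Nat.add_le_of_dvd_of_dvd_of_lt (pow_nu2_dvd k)
    (pow_dvd_pow 2 (nu2_lt_of_lt_two_pow hk hkm).le) hkm

theorem block_subset_Icc {m k : ℕ} (hk : 0 < k) (hkm : k < 2 ^ m) :
    block k ⊆ Finset.Icc 1 (2 ^ m - 1) := by
  intro j hj
  have hlow := pow_nu2_le hk
  have hhigh := add_pow_nu2_le_two_pow hk hkm
  simp only [block, Finset.mem_Icc] at hj ⊢
  omega

theorem nu2_lt_of_mem_block_of_ne {j k : ℕ} (hj : j ∈ block k) (hjk : j ≠ k) : ν₂ j < ν₂ k := by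
  by_contra! hkj
  have hdvd : 2 ^ ν₂ k ∣ j := (pow_dvd_pow 2 hkj).trans (pow_nu2_dvd j)
  have hpos : 0 < 2 ^ ν₂ k := Nat.two_pow_pos _
  simp only [block, Finset.mem_Icc] at hj
  rcases hjk.lt_or_gt with hlt | hgt
  · have := Nat.add_le_of_dvd_of_dvd_of_lt hdvd (pow_nu2_dvd k) hlt
    omega
  · have := Nat.add_le_of_dvd_of_dvd_of_lt (pow_nu2_dvd k) hdvd hgt
    omega

theorem nu2_le_of_mem_block {j k : ℕ} (hj : j ∈ block k) : ν₂ j ≤ ν₂ k := by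
  rcases eq_or_ne j k with rfl | hjk
  · rfl
  · exact (nu2_lt_of_mem_block_of_ne hj hjk).le

/-- `B(k) ⊆ {1,…,2^m - 1}`, every `j ∈ B(k)` has depth `≥ d_m(k)`, with equality
only for `j = k`. -/
theorem block_subset_and_depth (m k : ℕ) (hk1 : 1 ≤ k) (hk2 : k ≤ 2 ^ m - 1) :
    block k ⊆ Finset.Icc 1 (2 ^ m - 1) ∧
    (∀ j ∈ block k, depth m k ≤ depth m j) ∧
    (∀ j ∈ block k, depth m j = depth m k → j = k) := by
  have hkm : k < 2 ^ m := by have := Nat.two_pow_pos m; omega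
  refine ⟨block_subset_Icc hk1 hkm, fun j hj => Nat.sub_le_sub_left (nu2_le_of_mem_block hj) m,
    fun j hj hdepth => ?_⟩
  by_contra hjk
  have hνj := nu2_lt_of_mem_block_of_ne hj hjk
  have hνk := nu2_lt_of_lt_two_pow hk1 hkm
  simp only [depth] at hdepth
  omega
end

section
/- There is no 1-conform 3×7 multicolor tableau; i.e., with a single color, the conformity conditions (every cell has a unique color, columns are monotone, and the left-right rule with predicate Q holds) cannot all be satisfied for the tableau with 3 rows and 7 columns of depths d_3(k) = 3 - ν₂(k). -/
def blockL (k : ℕ) : Finset ℕ := Finset.Icc (k - (2 ^ ν₂ k - 1)) (k - 1)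
def blockR (k : ℕ) : Finset ℕ := Finset.Icc (k + 1) (k + (2 ^ ν₂ k - 1))
def lc (k : ℕ) : ℕ := k - 2 ^ (ν₂ k - 1)
def rc (k : ℕ) : ℕ := k + 2 ^ (ν₂ k - 1)

/-- The predicate `Q(c,k,j)` (for the cell row `i`) of the left-right rule. -/
def Q (m : ℕ) (M : ℕ → ℕ → Multiset ℕ) (c k i j : ℕ) : Prop :=
  c ∈ M i j ∧
  ((M i j).count c = 1 → (M (depth m k + 2) j).count c = 0) ∧
  ((M i j).count c ≠ 1 →
    (∀ j' ∈ blockL j, (M (depth m k) j').count c ≠ 1) ∨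
    (∀ j' ∈ blockR j, (M (depth m k) j').count c ≠ 1))

/-- A `t`-conform `(m × N')`-multicolor tableau: cells `(i,k)` with `k ∈ [N']`,
`i ∈ [d_m(k)]` carry multisets of colors from `[t]` such that every cell has a
unique color, columns are monotone under multiset inclusion, and the
quarter-subblock left-right rule holds. -/
def Conform (t m N' : ℕ) (M : ℕ → ℕ → Multiset ℕ) : Prop :=
  (∀ k ∈ Finset.Icc 1 N', ∀ i ∈ Finset.Icc 1 (depth m k),
    (∀ c ∈ M i k, c ∈ Finset.Icc 1 t) ∧ ∃ c, (M i k).count c = 1) ∧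
  (∀ k ∈ Finset.Icc 1 N', ∀ i i' : ℕ, 1 ≤ i → i < i' → i' ≤ depth m k →
    M i' k ≤ M i k) ∧
  (∀ k ∈ Finset.Icc 1 N', ∀ i ∈ Finset.Icc 1 (depth m k), ∀ c, (M i k).count c = 1 →
    ∃ Bq ∈ [blockL (lc k), blockR (lc k), blockL (rc k), blockR (rc k)],
      ∀ j ∈ Bq, Q m M c k i j)


lemma v2_2 : ν₂ 2 = 1 := padicValNat.self one_lt_two
lemma v2_4 : ν₂ 4 = 2 := by
  have h : (4:ℕ) = 2^2 := by norm_num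
  rw [ν₂, h, padicValNat.prime_pow]
lemma v2_6 : ν₂ 6 = 1 := by
  have h : (6:ℕ) = 2*3 := by norm_num
  rw [ν₂, h, padicValNat.mul (by norm_num) (by norm_num),
    padicValNat.self one_lt_two, padicValNat.eq_zero_of_not_dvd (by norm_num)]
lemma v2_odd {k : ℕ} (h : ¬ 2 ∣ k) : ν₂ k = 0 := padicValNat.eq_zero_of_not_dvd h

lemma depth_odd {k : ℕ} (h : ¬ 2 ∣ k) : depth 3 k = 3 := by rw [depth, v2_odd h]
lemma depth_4 : depth 3 4 = 1 := by rw [depth, v2_4]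
lemma lc_4 : lc 4 = 2 := by rw [lc, v2_4]; norm_num
lemma rc_4 : rc 4 = 6 := by rw [rc, v2_4]; norm_num
lemma blockL_2 : blockL 2 = {1} := by rw [blockL, v2_2]; rfl
lemma blockR_2 : blockR 2 = {3} := by rw [blockR, v2_2]; rfl
lemma blockL_6 : blockL 6 = {5} := by rw [blockL, v2_6]; rfl
lemma blockR_6 : blockR 6 = {7} := by rw [blockR, v2_6]; rfl

/-- There is no `1`-conform `3 × 7` multicolor tableau. -/
theorem no_one_conform_3x7 (M : ℕ → ℕ → Multiset ℕ) : ¬ Conform 1 3 7 M := by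
  rintro ⟨h1, -, h3⟩
  have hA : ∀ k ∈ Finset.Icc 1 7, ∀ i ∈ Finset.Icc 1 (depth 3 k), (M i k).count 1 = 1 := by
    intro k hk i hi
    obtain ⟨hmem, c, hc⟩ := h1 k hk i hi
    have hcmem : c ∈ M i k := Multiset.count_pos.mp (hc ▸ Nat.one_pos)
    have hc' := hmem c hcmem
    simp only [Finset.mem_Icc] at hc'
    have hc1 : c = 1 := le_antisymm hc'.2 hc'.1
    rwa [hc1] at hc
  have h4 : (4:ℕ) ∈ Finset.Icc 1 7 := by decide
  have hi4 : (1:ℕ) ∈ Finset.Icc 1 (depth 3 4) := by rw [depth_4]; decide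
  obtain ⟨Bq, hBq, hQ⟩ := h3 4 h4 1 hi4 1 (hA 4 h4 1 hi4)
  have key : ∀ j, ¬ 2 ∣ j → j ∈ Finset.Icc 1 7 → ¬ Q 3 M 1 4 1 j := by
    intro j hodd hj hQj
    have hd : depth 3 j = 3 := depth_odd hodd
    have h1j : (1:ℕ) ∈ Finset.Icc 1 (depth 3 j) := by rw [hd]; decide
    have h3j : (3:ℕ) ∈ Finset.Icc 1 (depth 3 j) := by rw [hd]; decide
    have hz := hQj.2.1 (hA j hj 1 h1j)
    have hz3 : (M 3 j).count 1 = 0 := by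
      have h32 : (3:ℕ) = depth 3 4 + 2 := by rw [depth_4]
      rw [h32]; exact hz
    have := hA j hj 3 h3j
    omega
  rw [lc_4, rc_4, blockL_2, blockR_2, blockL_6, blockR_6] at hBq
  simp only [List.mem_cons, List.mem_singleton, List.not_mem_nil, or_false] at hBq
  rcases hBq with h|h|h|h <;> subst h
  · exact key 1 (by norm_num) (by decide) (hQ 1 (by decide))
  · exact key 3 (by norm_num) (by decide) (hQ 3 (by decide))
  · exact key 5 (by norm_num) (by decide) (hQ 5 (by decide))
  · exact key 7 (by norm_num) (by decide) (hQ 7 (by decide))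
end
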